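/- If P is a lattice-face d-polytope, then π restricts to a bijection from L(NB(P)) onto L(π(P)), and likewise to a bijection from L(PB(P)) onto L(π(P)). -/

import Mathlib

open MeasureTheory Polynomial

noncomputable section

/-- The lattice points of `ℝ^d`: points all of whose coordinates are integers. -/
def latticePts (d : ℕ) : Set (Fin d → ℝ) := {x | ∀ i, ∃ n : ℤ, x i = (n : ℝ)}

/-- The projection `π^{(d-k)} : ℝ^d → ℝ^k` forgetting the last `d - k` coordinates
(for `k ≤ d`; junk value `0` in out-of-range coordinates otherwise). -/
def projTo (d k : ℕ) (x : Fin d → ℝ) : Fin k → ℝ :=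
  fun i => if h : (i : ℕ) < d then x ⟨(i : ℕ), h⟩ else 0

/-- A polytope with vertex set `V ⊆ ℝ^d` is a lattice-face polytope if for every
`0 ≤ k ≤ d-1` and every `(k+1)`-subset `U ⊆ V`, `π^{(d-k)}(aff(U) ∩ ℤ^d) = ℤ^k`. -/
def IsLatticeFace (d : ℕ) (V : Finset (Fin d → ℝ)) : Prop :=
  ∀ k : ℕ, k < d → ∀ U : Finset (Fin d → ℝ), U ⊆ V → U.card = k + 1 →
    projTo d k '' ((affineSpan ℝ (U : Set (Fin d → ℝ)) : Set (Fin d → ℝ)) ∩ latticePts d)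
      = latticePts k

/-- The last coordinate of a point of `ℝ^d`. -/
def lastCoord (d : ℕ) (x : Fin d → ℝ) : ℝ :=
  if h : 0 < d then x ⟨d - 1, by omega⟩ else 0

/-- The negative boundary `NB(P)`: points of `P` minimizing the last coordinate in
their fiber over `π(P)`. -/
def NB (d : ℕ) (P : Set (Fin d → ℝ)) : Set (Fin d → ℝ) :=
  {x | x ∈ P ∧ ∀ y ∈ P, projTo d (d - 1) y = projTo d (d - 1) x → lastCoord d x ≤ lastCoord d y}

/-- The positive boundary `PB(P)`: points of `P` maximizing the last coordinate in
their fiber over `π(P)`. -/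
def PB (d : ℕ) (P : Set (Fin d → ℝ)) : Set (Fin d → ℝ) :=
  {x | x ∈ P ∧ ∀ y ∈ P, projTo d (d - 1) y = projTo d (d - 1) x → lastCoord d y ≤ lastCoord d x}

/-- `i(P,m)`: the number of lattice points in the dilate `mP`. -/
def ehr (d : ℕ) (P : Set (Fin d → ℝ)) (m : ℕ) : ℕ :=
  (latticePts d ∩ (fun x => (m : ℝ) • x) '' P).ncard

/-- `î(P,m)`: the number of lattice points in the interior of the dilate `mP`. -/
def intEhr (d : ℕ) (P : Set (Fin d → ℝ)) (m : ℕ) : ℕ :=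
  (latticePts d ∩ interior ((fun x => (m : ℝ) • x) '' P)).ncard

/-- The `j`-th coordinate (`0`-indexed) of a point of `ℝ^d`, junk value `0` if `j ≥ d`. -/
def coordN {d : ℕ} (w : Fin d → ℝ) (j : ℕ) : ℝ := if h : j < d then w ⟨j, h⟩ else 0

/-- The vertex occurring in row `p` (0-indexed) of the matrices `X(σ,k)`, `Y(σ,k)`:
vertex `v_{σ(p+1)}` for `p < k`, and `v_{d+1}` for the last row of `X(σ,k)`. -/
def rowVert (d : ℕ) (v : Fin (d + 1) → Fin d → ℝ) (σ : Equiv.Perm (Fin d)) (k p : ℕ) :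
    Fin d → ℝ :=
  if h : p < k ∧ p < d then v (Fin.castSucc (σ ⟨p, h.2⟩)) else v (Fin.last d)

/-- The matrix `X(σ,k)` with rows `(1, x_{σ(i),1},…,x_{σ(i),k})` for `1 ≤ i ≤ k`
followed by `(1, x_{d+1,1},…,x_{d+1,k})`. -/
def Xmat (d : ℕ) (v : Fin (d + 1) → Fin d → ℝ) (σ : Equiv.Perm (Fin d)) (k : ℕ) :
    Matrix (Fin (k + 1)) (Fin (k + 1)) ℝ :=
  Matrix.of fun p q =>
    if (q : ℕ) = 0 then 1 else coordN (rowVert d v σ k (p : ℕ)) ((q : ℕ) - 1)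

/-- The matrix `Y(σ,k)` with rows `(1, x_{σ(i),1},…,x_{σ(i),k-1})` for `1 ≤ i ≤ k`. -/
def Ymat (d : ℕ) (v : Fin (d + 1) → Fin d → ℝ) (σ : Equiv.Perm (Fin d)) (k : ℕ) :
    Matrix (Fin k) (Fin k) ℝ :=
  Matrix.of fun p q =>
    if (q : ℕ) = 0 then 1 else coordN (rowVert d v σ k (p : ℕ)) ((q : ℕ) - 1)

/-- The matrix `X̃(σ,k;x)`: `X(σ,k)` with its last row replaced by `(1, x_1,…,x_k)`. -/
def Xtil (d : ℕ) (v : Fin (d + 1) → Fin d → ℝ) (σ : Equiv.Perm (Fin d)) (k : ℕ)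
    (x : Fin d → ℝ) : Matrix (Fin (k + 1)) (Fin (k + 1)) ℝ :=
  Matrix.of fun p q =>
    if (q : ℕ) = 0 then 1
    else if (p : ℕ) < k then coordN (rowVert d v σ k (p : ℕ)) ((q : ℕ) - 1)
    else coordN x ((q : ℕ) - 1)

/-- `z(σ,k) = det X(σ,k) / det Y(σ,k)`; note `z(σ,0) = 1`. -/
def zc (d : ℕ) (v : Fin (d + 1) → Fin d → ℝ) (σ : Equiv.Perm (Fin d)) (k : ℕ) : ℝ :=
  (Xmat d v σ k).det / (Ymat d v σ k).det

/-- The minor `m(σ,k;j)` of `X̃(σ,k;x)` obtained by deleting the last row and the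
`(j+1)`-st column (it does not depend on `x`). -/
def minorM (d : ℕ) (v : Fin (d + 1) → Fin d → ℝ) (σ : Equiv.Perm (Fin d)) (k j : ℕ) : ℝ :=
  (Matrix.of fun p q : Fin k =>
    Xmat d v σ k (Fin.castSucc p) (if (q : ℕ) < j + 1 then Fin.castSucc q else q.succ)).det

/-- A `d`-simplex with vertices `v_1, …, v_{d+1}` is in general position if its vertices
are affinely independent and for every `0 ≤ k ≤ d-1` and every `(k+1)`-subset `U` of the
vertex set, `π^{(d-k)}(conv U)` is a `k`-simplex. -/
def SimplexGenPos (d : ℕ) (v : Fin (d + 1) → Fin d → ℝ) : Prop :=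
  AffineIndependent ℝ v ∧
    ∀ k : ℕ, k < d → ∀ U : Finset (Fin (d + 1)), U.card = k + 1 →
      affineSpan ℝ (projTo d k '' (v '' (U : Set (Fin (d + 1))))) = ⊤

/-- A lattice-face `d`-simplex, given by its `d+1` affinely independent vertices. -/
def SimplexLatticeFace (d : ℕ) (v : Fin (d + 1) → Fin d → ℝ) : Prop :=
  AffineIndependent ℝ v ∧
    ∀ k : ℕ, k < d → ∀ U : Finset (Fin (d + 1)), U.card = k + 1 →
      projTo d k ''
          ((affineSpan ℝ (v '' (U : Set (Fin (d + 1)))) : Set (Fin d → ℝ)) ∩ latticePts d)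
        = latticePts k

open scoped Classical in
/-- The sign of a facet `F` of `P`: `+1` if `F` has a relative-interior point on the
positive boundary, `-1` if on the negative boundary, `0` otherwise. -/
def facetSign (d : ℕ) (P F : Set (Fin d → ℝ)) : ℝ :=
  if ∃ x ∈ intrinsicInterior ℝ F, x ∈ PB d P then 1
  else if ∃ x ∈ intrinsicInterior ℝ F, x ∈ NB d P then -1
  else 0

/-- The Bernoulli polynomial `B_n(x)`, as a real polynomial. -/
def bernR (n : ℕ) : Polynomial ℝ := (Polynomial.bernoulli n).map (algebraMap ℚ ℝ)

/-- The `k`-th power sum polynomial `P_k(x) = (B_{k+1}(x+1) - B_{k+1}(0))/(k+1)`. -/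
def PkR (k : ℕ) : Polynomial ℝ :=
  Polynomial.C (((k : ℝ) + 1)⁻¹) *
    ((bernR (k + 1)).comp (Polynomial.X + 1) - Polynomial.C ((bernR (k + 1)).eval 0))

/-- The extension of the summation operation: for a polynomial `h(s) = Σ_k h_k s^k`,
`Σ_{s=1}^{u} h := h_0 u + Σ_{k ≥ 1} h_k P_k(u)`, as a polynomial in the upper bound `u`. -/
def extSumPoly (h : Polynomial ℝ) : Polynomial ℝ :=
  Polynomial.C (h.coeff 0) * Polynomial.X +
    ∑ k ∈ Finset.Icc 1 h.natDegree, Polynomial.C (h.coeff k) * PkR k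

/-- `fdPoly n a` is the polynomial (in the first variable `a_1`) expressing
`f_{n+1}(a_1, a 0, a 1, …)`, defined recursively by `f_1(a_1) = a_1` and
`f_d(a_1,…,a_d) = Σ_{s=1}^{a_1} f_{d-1}(a_2 s, a_3, …, a_d)` using the extended sum. -/
def fdPoly : ℕ → (ℕ → ℝ) → Polynomial ℝ
  | 0, _ => Polynomial.X
  | n + 1, a =>
      extSumPoly ((fdPoly n (fun i => a (i + 1))).comp (Polynomial.C (a 0) * Polynomial.X))

/-- `f_d(a_1, …, a_d)` where `a_k = a (k-1)` (0-indexed). -/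
def fd (d : ℕ) (a : ℕ → ℝ) : ℝ := (fdPoly (d - 1) (fun i => a (i + 1))).eval (a 0)

/-- `g_d(b_1, …, b_d) = f_d(b_1/b_0, b_2/b_1, …, b_d/b_{d-1})` where `b_k = b k` and
`b 0 = 1` by convention. -/
def gd (d : ℕ) (b : ℕ → ℝ) : ℝ := fd d (fun i => b (i + 1) / b i)

/-- `x̄` for an integer: `x̄ = x` if `x ≥ 0` and `x̄ = -x-1` if `x < 0`. -/
def barNat (n : ℤ) : ℕ := if 0 ≤ n then n.toNat else (-n - 1).toNat

/-- The half-open segment `Ω(conv(0,x))`: `(0,x]` if `x ≥ 0` and `(x,0]` if `x < 0`. -/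
def hoSeg (x : ℝ) : Set ℝ := if 0 ≤ x then Set.Ioc 0 x else Set.Ioc x 0

/-- The previous coordinate `s_{k-1}` of a point `s ∈ ℝ^d`, with `s_0 = 1`. -/
def sPrev (d : ℕ) (s : Fin d → ℝ) (k : Fin d) : ℝ :=
  if (k : ℕ) = 0 then 1 else s ⟨(k : ℕ) - 1, lt_of_le_of_lt (Nat.sub_le _ _) k.isLt⟩

/-- The nested sum `Σ_{s_1=1}^{⌊a_1 sp⌋¯} Σ_{s_2=1}^{⌊a_2 s_1⌋¯} ⋯ 1` over positive
integers. -/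
def nestedCount : ℕ → (ℕ → ℝ) → ℕ → ℕ
  | 0, _, _ => 1
  | n + 1, a, sp =>
      ∑ s ∈ Finset.Icc 1 (barNat ⌊a 0 * (sp : ℝ)⌋), nestedCount n (fun i => a (i + 1)) s

/-- The nested extended sum `Σ_{s_1=1}^{\bar{a_1 s_0}} ⋯ Σ_{s_d=1}^{\bar{a_d s_{d-1}}} 1`,
as a polynomial in `s_0`, where for positive `s` the bar is `a s` if `a > 0` and
`-a s - 1` if `a < 0`. -/
def barNested : ℕ → (ℕ → ℝ) → Polynomial ℝ
  | 0, _ => 1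
  | n + 1, a =>
      (extSumPoly (barNested n (fun i => a (i + 1)))).comp
        (if 0 < a 0 then Polynomial.C (a 0) * Polynomial.X
         else -(Polynomial.C (a 0) * Polynomial.X) - 1)

/-- Row vertex for the hat matrices: `v_{σ(p+1)}` for `p < d`. -/
def rowVert' (d : ℕ) (v : Fin (d + 1) → Fin d → ℝ) (σ : Equiv.Perm (Fin d)) (p : ℕ) :
    Fin d → ℝ :=
  if h : p < d then v (Fin.castSucc (σ ⟨p, h⟩)) else v (Fin.last d)

/-- The matrix `X̂(σ,k)` with entries `x̂_{σ(p),q} = x_{σ(p),q} - x_{d+1,q}`. -/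
def XhatM (d : ℕ) (v : Fin (d + 1) → Fin d → ℝ) (σ : Equiv.Perm (Fin d)) (k : ℕ) :
    Matrix (Fin k) (Fin k) ℝ :=
  Matrix.of fun p q =>
    coordN (rowVert' d v σ (p : ℕ)) (q : ℕ) - coordN (v (Fin.last d)) (q : ℕ)

/-- The matrix `Ŷ(σ,k)` with rows `(1, x̂_{σ(p),1},…,x̂_{σ(p),k-1})`. -/
def YhatM (d : ℕ) (v : Fin (d + 1) → Fin d → ℝ) (σ : Equiv.Perm (Fin d)) (k : ℕ) :
    Matrix (Fin k) (Fin k) ℝ :=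
  Matrix.of fun p q =>
    if (q : ℕ) = 0 then 1
    else coordN (rowVert' d v σ (p : ℕ)) ((q : ℕ) - 1) - coordN (v (Fin.last d)) ((q : ℕ) - 1)

/-- `ẑ(σ,k) = det X̂(σ,k) / det Ŷ(σ,k)`. -/
def zhat (d : ℕ) (v : Fin (d + 1) → Fin d → ℝ) (σ : Equiv.Perm (Fin d)) (k : ℕ) : ℝ :=
  (XhatM d v σ k).det / (YhatM d v σ k).det

end


/-! A point of `NB(P)` or `PB(P)` cannot be interior to `P`, since the fibre of `π` through it
extends below (resp. above) it. By Carathéodory's theorem such a boundary point lies in the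
affine span `A` of `d` vertices. The lattice-face condition says that `π` maps `L(A)` onto
`ℤ^{d-1}`; as `dim A ≤ d - 1`, this forces `π` to be injective on `A`, so the point of `A`
over a lattice point of `ℤ^{d-1}` is itself a lattice point. Injectivity of `π` on the
boundaries is clear, and surjectivity onto `π(P)` comes from compactness of the fibres. -/

open Module Set Filter Topology

section Projection

variable {d k : ℕ}

def projToLinear (d k : ℕ) : (Fin d → ℝ) →ₗ[ℝ] (Fin k → ℝ) where
  toFun := projTo d k
  map_add' x y := by
    ext i
    simp only [projTo, Pi.add_apply]
    split_ifs <;> simp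
  map_smul' c x := by
    ext i
    simp only [projTo, Pi.smul_apply, RingHom.id_apply, smul_eq_mul]
    split_ifs <;> simp

@[simp]
lemma coe_projToLinear : ⇑(projToLinear d k) = projTo d k := rfl

lemma projTo_sub (x y : Fin d → ℝ) : projTo d k (x - y) = projTo d k x - projTo d k y :=
  map_sub (projToLinear d k) x y

lemma continuous_projTo : Continuous (projTo d k) :=
  (projToLinear d k).continuous_of_finiteDimensional

lemma continuous_lastCoord : Continuous (lastCoord d) := by
  unfold lastCoord
  split_ifs
  exacts [continuous_apply _, continuous_const]

lemma projTo_mem_latticePts {x : Fin d → ℝ} (hx : x ∈ latticePts d) :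
    projTo d k x ∈ latticePts k := by
  intro i
  unfold projTo
  split_ifs
  exacts [hx _, ⟨0, by simp⟩]

lemma lastCoord_eq_apply (hd : 1 ≤ d) (x : Fin d → ℝ) :
    lastCoord d x = x ⟨d - 1, by omega⟩ :=
  dif_pos hd

lemma eq_of_projTo_eq_of_lastCoord_eq (hd : 1 ≤ d) {x y : Fin d → ℝ}
    (hproj : projTo d (d - 1) x = projTo d (d - 1) y) (hlast : lastCoord d x = lastCoord d y) :
    x = y := by
  ext i
  rcases (Nat.le_sub_one_of_lt i.2).lt_or_eq with hi | hi
  · simpa [projTo, hi, i.2] using congrFun hproj ⟨i, hi⟩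
  · rw [show i = ⟨d - 1, by omega⟩ from Fin.ext hi]
    rwa [lastCoord_eq_apply hd, lastCoord_eq_apply hd] at hlast

lemma projTo_update_last (hd : 1 ≤ d) (x : Fin d → ℝ) (t : ℝ) :
    projTo d (d - 1) (Function.update x ⟨d - 1, by omega⟩ t) = projTo d (d - 1) x := by
  ext i
  simp only [projTo]
  split_ifs
  · rw [Function.update_of_ne]
    exact Fin.ne_of_val_ne i.2.ne
  · rfl

lemma lastCoord_update_last (hd : 1 ≤ d) (x : Fin d → ℝ) (t : ℝ) :
    lastCoord d (Function.update x ⟨d - 1, by omega⟩ t) = t := by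
  rw [lastCoord_eq_apply hd, Function.update_self]

end Projection

section Boundary

variable {d : ℕ} {P : Set (Fin d → ℝ)}

lemma eventually_exists_mem_fiber_of_mem_interior (hd : 1 ≤ d) {x : Fin d → ℝ}
    (hx : x ∈ interior P) :
    ∀ᶠ t in 𝓝 (lastCoord d x),
      ∃ y ∈ P, projTo d (d - 1) y = projTo d (d - 1) x ∧ lastCoord d y = t := by
  have hP : P ∈ 𝓝 (Function.update x ⟨d - 1, by omega⟩ (lastCoord d x)) := by
    rw [lastCoord_eq_apply hd, Function.update_eq_self]
    exact mem_interior_iff_mem_nhds.1 hx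
  filter_upwards [(continuous_const.update _ continuous_id).continuousAt hP] with t ht
  exact ⟨_, ht, projTo_update_last hd x t, lastCoord_update_last hd x t⟩

lemma notMem_interior_of_mem_NB (hd : 1 ≤ d) {x : Fin d → ℝ} (hx : x ∈ NB d P) :
    x ∉ interior P := fun hint ↦ by
  obtain ⟨_, ⟨y, hyP, hyx, rfl⟩, hlt⟩ :=
    ((eventually_exists_mem_fiber_of_mem_interior hd hint).and_frequently
      (frequently_lt_nhds _)).exists
  exact hlt.not_ge (hx.2 y hyP hyx)

lemma notMem_interior_of_mem_PB (hd : 1 ≤ d) {x : Fin d → ℝ} (hx : x ∈ PB d P) :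
    x ∉ interior P := fun hint ↦ by
  obtain ⟨_, ⟨y, hyP, hyx, rfl⟩, hgt⟩ :=
    ((eventually_exists_mem_fiber_of_mem_interior hd hint).and_frequently
      (frequently_gt_nhds _)).exists
  exact hgt.not_ge (hx.2 y hyP hyx)

lemma injOn_projTo_NB (hd : 1 ≤ d) : InjOn (projTo d (d - 1)) (NB d P) :=
  fun x hx y hy hxy ↦
    eq_of_projTo_eq_of_lastCoord_eq hd hxy ((hx.2 y hy.1 hxy.symm).antisymm (hy.2 x hx.1 hxy))

lemma injOn_projTo_PB (hd : 1 ≤ d) : InjOn (projTo d (d - 1)) (PB d P) :=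
  fun x hx y hy hxy ↦
    eq_of_projTo_eq_of_lastCoord_eq hd hxy ((hy.2 x hx.1 hxy).antisymm (hx.2 y hy.1 hxy.symm))

lemma isCompact_fiber (hP : IsCompact P) (p : Fin d → ℝ) :
    IsCompact (P ∩ projTo d (d - 1) ⁻¹' {projTo d (d - 1) p}) :=
  hP.inter_right (isClosed_singleton.preimage continuous_projTo)

lemma image_projTo_NB (hP : IsCompact P) :
    projTo d (d - 1) '' NB d P = projTo d (d - 1) '' P := by
  refine (image_mono fun x hx ↦ hx.1).antisymm ?_
  rintro _ ⟨p, hp, rfl⟩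
  obtain ⟨x, ⟨hxP, hxp⟩, hmin⟩ :=
    (isCompact_fiber hP p).exists_isMinOn ⟨p, hp, rfl⟩ continuous_lastCoord.continuousOn
  exact ⟨x, ⟨hxP, fun y hy hyx ↦ isMinOn_iff.1 hmin y ⟨hy, hyx.trans hxp⟩⟩, hxp⟩

lemma image_projTo_PB (hP : IsCompact P) :
    projTo d (d - 1) '' PB d P = projTo d (d - 1) '' P := by
  refine (image_mono fun x hx ↦ hx.1).antisymm ?_
  rintro _ ⟨p, hp, rfl⟩
  obtain ⟨x, ⟨hxP, hxp⟩, hmax⟩ :=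
    (isCompact_fiber hP p).exists_isMaxOn ⟨p, hp, rfl⟩ continuous_lastCoord.continuousOn
  exact ⟨x, ⟨hxP, fun y hy hyx ↦ isMaxOn_iff.1 hmax y ⟨hy, hyx.trans hxp⟩⟩, hxp⟩

lemma bijOn_projTo_latticePts_of_section {B : Set (Fin d → ℝ)}
    (hinj : InjOn (projTo d (d - 1)) B) (himage : projTo d (d - 1) '' B = projTo d (d - 1) '' P)
    (hlat : ∀ x ∈ B, projTo d (d - 1) x ∈ latticePts (d - 1) → x ∈ latticePts d) :
    BijOn (projTo d (d - 1)) (latticePts d ∩ B) (latticePts (d - 1) ∩ projTo d (d - 1) '' P) := by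
  refine ⟨fun x hx ↦ ⟨projTo_mem_latticePts hx.1, himage ▸ mem_image_of_mem _ hx.2⟩,
    hinj.mono inter_subset_right, ?_⟩
  rintro _ ⟨hy, hyP⟩
  rw [← himage] at hyP
  obtain ⟨x, hx, rfl⟩ := hyP
  exact ⟨x, ⟨hlat x hx hy, hx⟩, rfl⟩

end Boundary

lemma finrank_le_card_of_affineSpan_eq_top {k E : Type*} [DivisionRing k] [AddCommGroup E]
    [Module k E] {V : Finset E} (hV : affineSpan k (V : Set E) = ⊤) : finrank k E ≤ V.card := by
  have : Nonempty V := Fintype.card_pos_iff.1 <|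
    AffineSubspace.card_pos_of_affineSpan_eq_top k E E (p := ((↑) : V → E)) (by simpa using hV)
  have hspan : vectorSpan k (range ((↑) : V → E)) = ⊤ := by
    rw [Subtype.range_coe]
    exact AffineSubspace.vectorSpan_eq_top_of_affineSpan_eq_top k E E hV
  calc finrank k E = finrank k (vectorSpan k (range ((↑) : V → E))) := by rw [hspan, finrank_top]
    _ ≤ Fintype.card V := (finrank_vectorSpan_range_add_one_le k _).trans' (Nat.le_succ _)
    _ = V.card := Fintype.card_coe V

section ConvexHull

variable {E : Type*} [NormedAddCommGroup E] [NormedSpace ℝ E] [FiniteDimensional ℝ E]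

lemma exists_finset_card_le_finrank_of_notMem_interior_convexHull {s : Set E} {x : E}
    (hx : x ∈ convexHull ℝ s) (hint : x ∉ interior (convexHull ℝ s)) :
    ∃ t : Finset E, ↑t ⊆ s ∧ t.card ≤ finrank ℝ E ∧ x ∈ convexHull ℝ (t : Set E) := by
  classical
  obtain ⟨ι, _, z, w, hzs, hind, hw, hw1, rfl⟩ := eq_pos_convex_span_of_mem_convexHull hx
  have hmem : ∑ i, w i • z i ∈ convexHull ℝ (range z) :=
    (convex_convexHull ℝ _).sum_mem (fun i _ ↦ (hw i).le) hw1
      fun i _ ↦ subset_convexHull ℝ _ (mem_range_self i)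
  refine ⟨Finset.univ.image z, by simpa using hzs, ?_, by simpa using hmem⟩
  have hcard : Fintype.card ι ≤ finrank ℝ E + 1 :=
    hind.card_le_finrank_succ.trans (Nat.add_le_add_right (Submodule.finrank_le _) 1)
  refine Finset.card_image_le.trans (Nat.le_of_lt_succ (hcard.lt_of_ne fun hfull ↦ hint ?_))
  -- `z` is then an affine basis, in which `x` has the positive coordinates `w`.
  let b : AffineBasis ι ℝ E :=
    ⟨z, hind, hind.affineSpan_eq_top_iff_card_eq_finrank_add_one.2 hfull⟩
  refine interior_mono (convexHull_mono hzs) ?_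
  rw [show range z = range b from rfl, b.interior_convexHull]
  intro i
  rw [← Finset.affineCombination_eq_linear_combination _ _ _ hw1, show z = ⇑b from rfl,
    b.coord_apply_combination_of_mem (Finset.mem_univ i) hw1]
  exact hw i

lemma exists_finset_card_eq_finrank_mem_affineSpan {V : Finset E}
    (hV : affineSpan ℝ (V : Set E) = ⊤) {x : E} (hx : x ∈ convexHull ℝ (V : Set E))
    (hint : x ∉ interior (convexHull ℝ (V : Set E))) :
    ∃ U ⊆ V, U.card = finrank ℝ E ∧ x ∈ affineSpan ℝ (U : Set E) := by
  obtain ⟨t, htV, ht, hxt⟩ := exists_finset_card_le_finrank_of_notMem_interior_convexHull hx hint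
  obtain ⟨U, htU, hUV, hU⟩ :=
    Finset.exists_subsuperset_card_eq (Finset.coe_subset.1 htV) ht
      (finrank_le_card_of_affineSpan_eq_top hV)
  exact ⟨U, hUV, hU,
    affineSpan_mono ℝ (Finset.coe_subset.2 htU) (convexHull_subset_affineSpan _ hxt)⟩

end ConvexHull

section LatticeFace

variable {d k : ℕ}

lemma injOn_projTo_of_latticePts_subset_image {A : AffineSubspace ℝ (Fin d → ℝ)}
    (hdim : finrank ℝ A.direction ≤ k) (hlat : latticePts k ⊆ projTo d k '' A) :
    InjOn (projTo d k) A := by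
  let f := (projToLinear d k).comp A.direction.subtype
  have hsurj : Function.Surjective f := by
    rw [← LinearMap.range_eq_top, eq_top_iff, ← (Pi.basisFun ℝ (Fin k)).span_eq,
      Submodule.span_le]
    rintro _ ⟨i, rfl⟩
    obtain ⟨a, ha, ha0⟩ := hlat (show (0 : Fin k → ℝ) ∈ latticePts k from fun _ ↦ ⟨0, by simp⟩)
    obtain ⟨b, hb, hbi⟩ := hlat (show Pi.basisFun ℝ (Fin k) i ∈ latticePts k from
      fun j ↦ ⟨if j = i then 1 else 0, by
        rw [Pi.basisFun_apply, Pi.single_apply]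
        split_ifs <;> simp⟩)
    exact ⟨⟨b - a, A.vsub_mem_direction hb ha⟩, by simp [f, projTo_sub, ha0, hbi]⟩
  have hinj : Function.Injective f := by
    refine (LinearMap.injective_iff_surjective_of_finrank_eq_finrank ?_).2 hsurj
    have := LinearMap.finrank_le_finrank_of_surjective hsurj
    rw [finrank_fin_fun] at this ⊢
    exact hdim.antisymm this
  intro a ha b hb hab
  have hab' : f ⟨a - b, A.vsub_mem_direction ha hb⟩ = f 0 := by
    rw [map_zero]
    simp [f, projTo_sub, hab]
  exact sub_eq_zero.1 (congrArg Subtype.val (hinj hab'))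

lemma mem_latticePts_of_mem_affineSpan (hd : 1 ≤ d) {V : Finset (Fin d → ℝ)}
    (hLF : IsLatticeFace d V) {U : Finset (Fin d → ℝ)} (hUV : U ⊆ V) (hU : U.card = d)
    {x : Fin d → ℝ} (hx : x ∈ affineSpan ℝ (U : Set (Fin d → ℝ)))
    (hproj : projTo d (d - 1) x ∈ latticePts (d - 1)) : x ∈ latticePts d := by
  have hface := hLF (d - 1) (by omega) U hUV (by omega)
  have hdim : finrank ℝ (affineSpan ℝ (U : Set (Fin d → ℝ))).direction ≤ d - 1 := by
    classical
    have h := finrank_vectorSpan_image_finset_le ℝ id U (n := d - 1) (by omega)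
    rwa [Finset.image_id, ← direction_affineSpan] at h
  have hinj := injOn_projTo_of_latticePts_subset_image hdim
    (hface.symm.subset.trans (image_mono inter_subset_left))
  rw [← hface] at hproj
  obtain ⟨z, ⟨hzU, hz⟩, hzx⟩ := hproj
  rwa [hinj hx hzU hzx.symm]

lemma mem_latticePts_of_notMem_interior (hd : 1 ≤ d) {V : Finset (Fin d → ℝ)}
    (hspan : affineSpan ℝ (V : Set (Fin d → ℝ)) = ⊤) (hLF : IsLatticeFace d V)
    {x : Fin d → ℝ} (hx : x ∈ convexHull ℝ (V : Set (Fin d → ℝ)))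
    (hint : x ∉ interior (convexHull ℝ (V : Set (Fin d → ℝ))))
    (hproj : projTo d (d - 1) x ∈ latticePts (d - 1)) : x ∈ latticePts d := by
  obtain ⟨U, hUV, hU, hxU⟩ := exists_finset_card_eq_finrank_mem_affineSpan hspan hx hint
  exact mem_latticePts_of_mem_affineSpan hd hLF hUV (by simpa using hU) hxU hproj

end LatticeFace

theorem proj_bijOn_boundary_latticePts_general
    (d : ℕ) (hd : 1 ≤ d) (V : Finset (Fin d → ℝ))
    (hspan : affineSpan ℝ (V : Set (Fin d → ℝ)) = ⊤)
    (hLF : IsLatticeFace d V) :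
    Set.BijOn (projTo d (d - 1))
        (latticePts d ∩ NB d (convexHull ℝ (V : Set (Fin d → ℝ))))
        (latticePts (d - 1) ∩ projTo d (d - 1) '' convexHull ℝ (V : Set (Fin d → ℝ)))
      ∧ Set.BijOn (projTo d (d - 1))
          (latticePts d ∩ PB d (convexHull ℝ (V : Set (Fin d → ℝ))))
          (latticePts (d - 1) ∩ projTo d (d - 1) '' convexHull ℝ (V : Set (Fin d → ℝ))) := by
  have hP : IsCompact (convexHull ℝ (V : Set (Fin d → ℝ))) :=
    V.finite_toSet.isCompact_convexHull (𝕜 := ℝ)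
  have hlat := fun x hx hint ↦ mem_latticePts_of_notMem_interior hd hspan hLF (x := x) hx hint
  exact ⟨bijOn_projTo_latticePts_of_section (injOn_projTo_NB hd) (image_projTo_NB hP)
      fun x hx ↦ hlat x hx.1 (notMem_interior_of_mem_NB hd hx),
    bijOn_projTo_latticePts_of_section (injOn_projTo_PB hd) (image_projTo_PB hP)
      fun x hx ↦ hlat x hx.1 (notMem_interior_of_mem_PB hd hx)⟩

theorem proj_bijOn_boundary_latticePts
    (d : ℕ) (hd : 1 ≤ d) (V : Finset (Fin d → ℝ))
    (hspan : affineSpan ℝ (V : Set (Fin d → ℝ)) = ⊤)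
    (hvert : (V : Set (Fin d → ℝ))
      = Set.extremePoints ℝ (convexHull ℝ (V : Set (Fin d → ℝ))))
    (hLF : IsLatticeFace d V) :
    Set.BijOn (projTo d (d - 1))
        (latticePts d ∩ NB d (convexHull ℝ (V : Set (Fin d → ℝ))))
        (latticePts (d - 1) ∩ projTo d (d - 1) '' convexHull ℝ (V : Set (Fin d → ℝ)))
      ∧ Set.BijOn (projTo d (d - 1))
          (latticePts d ∩ PB d (convexHull ℝ (V : Set (Fin d → ℝ))))
          (latticePts (d - 1) ∩ projTo d (d - 1) '' convexHull ℝ (V : Set (Fin d → ℝ))) :=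
  proj_bijOn_boundary_latticePts_general d hd V hspan hLF
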